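/- Let n = 3^s·t where s ≥ 1, t > 1 and 3 ∤ t, and let β = σ^{−1} ρ_{(01)} σ ∈ Sym([3n]). Then for every x ∈ [3n]: β(x) = x + 1 if x_0·t + X ≡ 0 (mod 3); β(x) = x − 1 if x_0·t + X ≡ 1 (mod 3); and β(x) = x if x_0·t + X ≡ 2 (mod 3). -/

import Mathlib

lemma shuffleAux.div_lt (k n : ℕ) (x : Fin (k * n)) : (x : ℕ) / n < k := by
  have hx := x.isLt
  have hn : 0 < n := by
    rcases Nat.eq_zero_or_pos n with rfl | h
    · simp at hx
    · exact h
  exact (Nat.div_lt_iff_lt_mul hn).mpr hx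

lemma shuffleAux.mod_lt (k n : ℕ) (x : Fin (k * n)) : (x : ℕ) % n < n := by
  have hx := x.isLt
  have hn : 0 < n := by
    rcases Nat.eq_zero_or_pos n with rfl | h
    · simp at hx
    · exact h
  exact Nat.mod_lt _ hn

lemma shuffleAux.bound1 (k n : ℕ) (x : Fin (k * n)) :
    k * ((x : ℕ) % n) + (x : ℕ) / n < k * n := by
  have h1 := shuffleAux.mod_lt k n x
  have h2 := shuffleAux.div_lt k n x
  calc k * ((x : ℕ) % n) + (x : ℕ) / n
      < k * ((x : ℕ) % n) + k := by omega
    _ = k * ((x : ℕ) % n + 1) := by ring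
    _ ≤ k * n := Nat.mul_le_mul_left _ (by omega)

lemma shuffleAux.bound2 (k n : ℕ) (x : Fin (k * n)) (j : Fin k) :
    (x : ℕ) % n + (j : ℕ) * n < k * n := by
  have h1 := shuffleAux.mod_lt k n x
  have h2 := j.isLt
  calc (x : ℕ) % n + (j : ℕ) * n
      < n + (j : ℕ) * n := by omega
    _ = ((j : ℕ) + 1) * n := by ring
    _ ≤ k * n := Nat.mul_le_mul_right _ (by omega)

/-- The standard shuffle `σ` on a deck of `k * n` cards, where the card in position
`i + j·n` (`i ∈ [n]`, `j ∈ [k]`) is sent to position `k·i + j`; equivalently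
`σ(x) = k·(x mod n) + ⌊x / n⌋`. -/
noncomputable def stdShuffle (k n : ℕ) : Equiv.Perm (Fin (k * n)) :=
  Equiv.ofBijective
    (fun x => ⟨k * ((x : ℕ) % n) + (x : ℕ) / n, shuffleAux.bound1 k n x⟩)
    (Finite.injective_iff_bijective.mp (by
      intro x y hxy
      simp only [Fin.mk.injEq] at hxy
      have hk : 0 < k := lt_of_le_of_lt (Nat.zero_le _) (shuffleAux.div_lt k n x)
      have key : ∀ z : Fin (k * n),
          (k * ((z : ℕ) % n) + (z : ℕ) / n) % k = (z : ℕ) / n ∧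
          (k * ((z : ℕ) % n) + (z : ℕ) / n) / k = (z : ℕ) % n := by
        intro z
        have hz := shuffleAux.div_lt k n z
        constructor
        · rw [Nat.mul_add_mod, Nat.mod_eq_of_lt hz]
        · rw [Nat.mul_add_div hk, Nat.div_eq_of_lt hz, Nat.add_zero]
      obtain ⟨h1x, h2x⟩ := key x
      obtain ⟨h1y, h2y⟩ := key y
      rw [hxy] at h1x h2x
      have hd : (x : ℕ) / n = (y : ℕ) / n := by omega
      have hm : (x : ℕ) % n = (y : ℕ) % n := by omega
      apply Fin.ext
      rw [← Nat.div_add_mod (x : ℕ) n, ← Nat.div_add_mod (y : ℕ) n, hd, hm]))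

/-- The permutation `ρ_τ` induced by a permutation `τ` of the `k` piles:
`ρ_τ(i + j·n) = i + τ(j)·n` for `i ∈ [n]`, `j ∈ [k]`. -/
noncomputable def pilePerm (k n : ℕ) (τ : Equiv.Perm (Fin k)) : Equiv.Perm (Fin (k * n)) :=
  Equiv.ofBijective
    (fun x => ⟨(x : ℕ) % n + ((τ ⟨(x : ℕ) / n, shuffleAux.div_lt k n x⟩ : Fin k) : ℕ) * n,
      shuffleAux.bound2 k n x _⟩)
    (Finite.injective_iff_bijective.mp (by
      intro x y hxy
      simp only [Fin.mk.injEq] at hxy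
      have hn : 0 < n := lt_of_le_of_lt (Nat.zero_le _) (shuffleAux.mod_lt k n x)
      have key : ∀ z : Fin (k * n),
          ((z : ℕ) % n + ((τ ⟨(z : ℕ) / n, shuffleAux.div_lt k n z⟩ : Fin k) : ℕ) * n) % n
            = (z : ℕ) % n ∧
          ((z : ℕ) % n + ((τ ⟨(z : ℕ) / n, shuffleAux.div_lt k n z⟩ : Fin k) : ℕ) * n) / n
            = ((τ ⟨(z : ℕ) / n, shuffleAux.div_lt k n z⟩ : Fin k) : ℕ) := by
        intro z
        have h1 := shuffleAux.mod_lt k n z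
        constructor
        · rw [Nat.add_mul_mod_self_right, Nat.mod_eq_of_lt h1]
        · rw [Nat.add_mul_div_right _ _ hn, Nat.div_eq_of_lt h1, Nat.zero_add]
      obtain ⟨h1x, h2x⟩ := key x
      obtain ⟨h1y, h2y⟩ := key y
      rw [hxy] at h1x h2x
      have hm : (x : ℕ) % n = (y : ℕ) % n := by omega
      have hv : ((τ ⟨(x : ℕ) / n, shuffleAux.div_lt k n x⟩ : Fin k) : ℕ)
          = ((τ ⟨(y : ℕ) / n, shuffleAux.div_lt k n y⟩ : Fin k) : ℕ) := by omega
      have hτ : (⟨(x : ℕ) / n, shuffleAux.div_lt k n x⟩ : Fin k)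
          = ⟨(y : ℕ) / n, shuffleAux.div_lt k n y⟩ := τ.injective (Fin.ext hv)
      have hd : (x : ℕ) / n = (y : ℕ) / n := congrArg Fin.val hτ
      apply Fin.ext
      rw [← Nat.div_add_mod (x : ℕ) n, ← Nat.div_add_mod (y : ℕ) n, hd, hm]))

/-- The shuffle group `G_{k,kn}`, generated by the standard shuffle `σ` together with
the pile permutations `ρ_τ` for all `τ ∈ Sym([k])`. -/
noncomputable def shuffleGroup (k n : ℕ) : Subgroup (Equiv.Perm (Fin (k * n))) :=
  Subgroup.closure ({stdShuffle k n} ∪ Set.range (pilePerm k n))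

/-- For `x ∈ [3n]` with `n = 3^s·t`, the `i`-th base-3 digit `x_i` of `⌊x/t⌋`. -/
def digit (t x i : ℕ) : ℕ := (x / t / 3 ^ i) % 3

lemma digit_lt (t x i : ℕ) : digit t x i < 3 := Nat.mod_lt _ (by omega)

/-- `T(x) = |{i ∈ {0,...,s} : x_i = 2}|`, the number of base-3 digits of `⌊x/t⌋`
(among positions `0,...,s`) equal to `2`. -/
def twoCount (s t x : ℕ) : ℕ :=
  ((Finset.range (s + 1)).filter (fun i => digit t x i = 2)).card

/-!
Conjugation by the standard shuffle turns the pile permutation `ρ_τ` into the permutation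
`x ↦ k⌊x/k⌋ + τ(x mod k)`, so `β` swaps `3m` and `3m + 1` and fixes `3m + 2`. Writing
`⌊x/t⌋ = 3q + x_0` gives `x = 3qt + x_0 t + X`, hence `x ≡ x_0 t + X (mod 3)`.
-/

lemma stdShuffle_apply_val (k n : ℕ) (x : Fin (k * n)) :
    (stdShuffle k n x : ℕ) = k * (x % n) + x / n := rfl

lemma pilePerm_apply_val (k n : ℕ) (τ : Equiv.Perm (Fin k)) (x : Fin (k * n)) :
    (pilePerm k n τ x : ℕ) = x % n + τ ⟨x / n, shuffleAux.div_lt k n x⟩ * n := rfl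

lemma stdShuffle_symm_apply_val (k n : ℕ) (x : Fin (k * n)) :
    ((stdShuffle k n).symm x : ℕ) = x / k + x % k * n := by
  have hk : 0 < k := (Nat.zero_le _).trans_lt (shuffleAux.div_lt k n x)
  have hn : 0 < n := (Nat.zero_le _).trans_lt (shuffleAux.mod_lt k n x)
  have hq : (x : ℕ) / k < n := Nat.div_lt_of_lt_mul x.2
  have hr : (x : ℕ) % k < k := Nat.mod_lt _ hk
  let y : Fin (k * n) := ⟨x / k + x % k * n, by nlinarith⟩
  have hy : stdShuffle k n y = x := Fin.ext <| by
    rw [stdShuffle_apply_val, Nat.add_mul_mod_self_right, Nat.mod_eq_of_lt hq,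
      Nat.add_mul_div_right _ _ hn, Nat.div_eq_of_lt hq, zero_add, Nat.div_add_mod]
  rw [← (stdShuffle k n).eq_symm_apply.mpr hy]

lemma stdShuffle_symm_apply_val_mod (k n : ℕ) (x : Fin (k * n)) :
    ((stdShuffle k n).symm x : ℕ) % n = x / k := by
  rw [stdShuffle_symm_apply_val, Nat.add_mul_mod_self_right,
    Nat.mod_eq_of_lt (Nat.div_lt_of_lt_mul x.2)]

lemma stdShuffle_symm_apply_val_div (k n : ℕ) (x : Fin (k * n)) :
    ((stdShuffle k n).symm x : ℕ) / n = x % k := by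
  have hn : 0 < n := (Nat.zero_le _).trans_lt (shuffleAux.mod_lt k n x)
  rw [stdShuffle_symm_apply_val, Nat.add_mul_div_right _ _ hn,
    Nat.div_eq_of_lt (Nat.div_lt_of_lt_mul x.2), zero_add]

lemma stdShuffle_mul_pilePerm_mul_inv_apply_val (k n : ℕ) [NeZero k] (τ : Equiv.Perm (Fin k))
    (x : Fin (k * n)) :
    ((stdShuffle k n * pilePerm k n τ * (stdShuffle k n)⁻¹) x : ℕ) =
      k * (x / k) + (τ (Fin.ofNat k x) : ℕ) := by
  have hn : 0 < n := (Nat.zero_le _).trans_lt (shuffleAux.mod_lt k n x)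
  set y := (stdShuffle k n).symm x
  have hj : (⟨y / n, shuffleAux.div_lt k n y⟩ : Fin k) = Fin.ofNat k x :=
    Fin.ext (by rw [Fin.val_ofNat, Fin.val_mk, stdShuffle_symm_apply_val_div])
  have hyn : (y : ℕ) % n < n := Nat.mod_lt _ hn
  rw [Equiv.Perm.mul_apply, Equiv.Perm.mul_apply, Equiv.Perm.inv_def, stdShuffle_apply_val,
    pilePerm_apply_val, hj, Nat.add_mul_mod_self_right, Nat.mod_mod,
    Nat.add_mul_div_right _ _ hn, Nat.div_eq_of_lt hyn, zero_add, stdShuffle_symm_apply_val_mod]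

lemma digit_zero_mul_add_mod_three (t x : ℕ) : (digit t x 0 * t + x % t) % 3 = x % 3 := by
  have h : x / t % 3 * t + x % t ≡ x [MOD 3] := by
    simpa only [Nat.div_add_mod'] using ((Nat.mod_modEq (x / t) 3).mul_right t).add_right (x % t)
  simp only [digit, pow_zero, Nat.div_one]
  exact h

theorem beta_action_general (t n : ℕ) :
    ∀ x : Fin (3 * n),
      ((digit t (x : ℕ) 0 * t + (x : ℕ) % t) % 3 = 0 →
        (((stdShuffle 3 n * pilePerm 3 n (Equiv.swap 0 1) * (stdShuffle 3 n)⁻¹) x : ℕ) : ℤ) =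
          ((x : ℕ) : ℤ) + 1) ∧
      ((digit t (x : ℕ) 0 * t + (x : ℕ) % t) % 3 = 1 →
        (((stdShuffle 3 n * pilePerm 3 n (Equiv.swap 0 1) * (stdShuffle 3 n)⁻¹) x : ℕ) : ℤ) =
          ((x : ℕ) : ℤ) - 1) ∧
      ((digit t (x : ℕ) 0 * t + (x : ℕ) % t) % 3 = 2 →
        (((stdShuffle 3 n * pilePerm 3 n (Equiv.swap 0 1) * (stdShuffle 3 n)⁻¹) x : ℕ) : ℤ) =
          ((x : ℕ) : ℤ)) := by
  intro x
  simp only [digit_zero_mul_add_mod_three, stdShuffle_mul_pilePerm_mul_inv_apply_val]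
  have residue : ∀ r : Fin 3, (x : ℕ) % 3 = r → Fin.ofNat 3 x = r :=
    fun r h => Fin.ext (by rw [Fin.val_ofNat, h])
  refine ⟨fun h => ?_, fun h => ?_, fun h => ?_⟩
  · rw [residue 0 h, Equiv.swap_apply_left]
    push_cast; omega
  · rw [residue 1 h, Equiv.swap_apply_right]
    push_cast; omega
  · rw [residue 2 h, Equiv.swap_apply_of_ne_of_ne (by decide) (by decide)]
    push_cast; omega

/-- The action of `β = σ^{-1} ρ_{(01)} σ` of the paper (acting on the right, i.e.
applying `σ^{-1}` first, then `ρ_{(01)}`, then `σ`). -/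
theorem beta_action (s t n : ℕ) (hs : 1 ≤ s) (ht : 1 < t) (h3t : ¬ 3 ∣ t) (hn : n = 3 ^ s * t) :
    ∀ x : Fin (3 * n),
      ((digit t (x : ℕ) 0 * t + (x : ℕ) % t) % 3 = 0 →
        (((stdShuffle 3 n * pilePerm 3 n (Equiv.swap 0 1) * (stdShuffle 3 n)⁻¹) x : ℕ) : ℤ) =
          ((x : ℕ) : ℤ) + 1) ∧
      ((digit t (x : ℕ) 0 * t + (x : ℕ) % t) % 3 = 1 →
        (((stdShuffle 3 n * pilePerm 3 n (Equiv.swap 0 1) * (stdShuffle 3 n)⁻¹) x : ℕ) : ℤ) =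
          ((x : ℕ) : ℤ) - 1) ∧
      ((digit t (x : ℕ) 0 * t + (x : ℕ) % t) % 3 = 2 →
        (((stdShuffle 3 n * pilePerm 3 n (Equiv.swap 0 1) * (stdShuffle 3 n)⁻¹) x : ℕ) : ℤ) =
          ((x : ℕ) : ℤ)) :=
  beta_action_general t n
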